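/- Let α_0, …, α_s be real numbers, q ≥ 1 an integer, and a ≥ 1, b integers with |b| ≤ a x, where x ≥ 2. Define β_0, …, β_s by Σ_{j} β_j n^j = Σ_i α_i (an+b)^i as polynomials in n. If ‖q α_i‖ ≤ ε (ax)^{−i} for each 1 ≤ i ≤ s (where ‖·‖ denotes distance to the nearest integer), then there is a positive integer q' ≤ C(s) q such that ‖q' β_j‖ ≤ C(s) ε x^{−j} for each 1 ≤ j ≤ s. -/

import Mathlib

open Finset Polynomial

/-!
Expanding `(an+b)^i` binomially gives `β_j = Σ_{i ≥ j} C(i,j) a^j b^{i-j} α_i`, an integer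
combination of the `α_i`. Hence `q β_j` differs from the integer `Σ_i C(i,j) a^j b^{i-j} round(q α_i)`
by at most `Σ_i C(i,j) a^j |b|^{i-j} ‖q α_i‖`, and `a^j |b|^{i-j} ≤ (ax)^i / x^j` turns each
term into at most `C(i,j) ε / x^j`. So `q' = q` works with `C(s) = (s+1) 2^s`.
-/

theorem Polynomial.coeff_C_mul_X_add_C_pow {R : Type*} [CommSemiring R] (u v : R) (i j : ℕ) :
    ((C u * X + C v) ^ i).coeff j = i.choose j * u ^ j * v ^ (i - j) := by
  have hcomp : (C u * X + C v) ^ i = ((X + C v) ^ i).comp (C u * X) := by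
    simp
  rw [hcomp, comp_C_mul_X_coeff, coeff_X_add_C_pow]
  ring

theorem eq_sum_choose_of_forall_sum_mul_pow_eq {R : Type*} [CommRing R] [IsDomain R] [Infinite R]
    (n : ℕ) (α β : ℕ → R) (A B : R)
    (h : ∀ y : R, ∑ j ∈ range n, β j * y ^ j = ∑ i ∈ range n, α i * (A * y + B) ^ i)
    {j : ℕ} (hj : j < n) :
    β j = ∑ i ∈ range n, α i * (i.choose j * A ^ j * B ^ (i - j)) := by
  have hpoly : ∑ k ∈ range n, C (β k) * X ^ k = ∑ i ∈ range n, C (α i) * (C A * X + C B) ^ i := by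
    refine Polynomial.funext fun y => ?_
    simpa only [eval_finsetSum, eval_mul, eval_pow, eval_add, eval_C, eval_X] using h y
  have hcoeff := congrArg (coeff · j) hpoly
  simpa only [finsetSum_coeff, coeff_C_mul, coeff_X_pow, coeff_C_mul_X_add_C_pow, mul_ite,
    mul_one, mul_zero, sum_ite_eq, mem_range, hj, if_true] using hcoeff

theorem abs_sub_round_sum_intCast_mul_le {ι : Type*} (S : Finset ι) (c : ι → ℤ) (t : ι → ℝ) :
    |∑ i ∈ S, c i * t i - ((round (∑ i ∈ S, c i * t i) : ℤ) : ℝ)|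
      ≤ ∑ i ∈ S, |(c i : ℝ)| * |t i - ((round (t i) : ℤ) : ℝ)| :=
  calc _ ≤ |∑ i ∈ S, (c i : ℝ) * t i - ((∑ i ∈ S, c i * round (t i) : ℤ) : ℝ)| := round_le _ _
    _ = |∑ i ∈ S, (c i : ℝ) * (t i - ((round (t i) : ℤ) : ℝ))| := by
      push_cast
      rw [← sum_sub_distrib]
      simp only [mul_sub]
    _ ≤ ∑ i ∈ S, |(c i : ℝ)| * |t i - ((round (t i) : ℤ) : ℝ)| := by
      simpa only [abs_mul] using
        abs_sum_le_sum_abs (fun i => (c i : ℝ) * (t i - ((round (t i) : ℤ) : ℝ))) S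

theorem abs_pow_mul_pow_sub_mul_pow_le {A B x : ℝ} (hA : 0 ≤ A) (hx : 0 ≤ x) (hB : |B| ≤ A * x)
    {i j : ℕ} (hji : j ≤ i) : |A ^ j * B ^ (i - j)| * x ^ j ≤ (A * x) ^ i := by
  obtain ⟨k, rfl⟩ := Nat.exists_eq_add_of_le hji
  rw [Nat.add_sub_cancel_left]
  calc |A ^ j * B ^ k| * x ^ j = A ^ j * |B| ^ k * x ^ j := by
        rw [abs_mul, abs_pow, abs_pow, abs_of_nonneg hA]
    _ ≤ A ^ j * (A * x) ^ k * x ^ j := by gcongr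
    _ = (A * x) ^ (j + k) := by ring

theorem abs_choose_mul_pow_mul_pow_sub_mul_le {A B x d ε : ℝ} (hA : 0 < A) (hx : 0 < x)
    (hε : 0 ≤ ε) (hB : |B| ≤ A * x) {i j : ℕ} (hji : j ≤ i) (hd : d ≤ ε / (A * x) ^ i) :
    |i.choose j * A ^ j * B ^ (i - j)| * d ≤ i.choose j * ε / x ^ j := by
  calc |i.choose j * A ^ j * B ^ (i - j)| * d = i.choose j * |A ^ j * B ^ (i - j)| * d := by
        rw [mul_assoc, abs_mul, Nat.abs_cast]
    _ ≤ i.choose j * |A ^ j * B ^ (i - j)| * (ε / (A * x) ^ i) := by gcongr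
    _ = i.choose j * (|A ^ j * B ^ (i - j)| * x ^ j) * ε / ((A * x) ^ i * x ^ j) := by
        field_simp
    _ ≤ i.choose j * (A * x) ^ i * ε / ((A * x) ^ i * x ^ j) := by
        gcongr
        exact abs_pow_mul_pow_sub_mul_pow_le hA.le hx.le hB hji
    _ = i.choose j * ε / x ^ j := by
        field_simp

theorem sum_range_choose_le (s j : ℕ) : ∑ i ∈ range (s + 1), i.choose j ≤ (s + 1) * 2 ^ s := by
  simpa using sum_le_card_nsmul (range (s + 1)) (·.choose j) (2 ^ s) fun i hi =>
    (i.choose_le_two_pow j).trans (Nat.pow_le_pow_right two_pos (mem_range_succ_iff.1 hi))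

theorem abs_mul_coeff_sub_round_le {s j : ℕ} {α β : ℕ → ℝ} {a b : ℤ} {q x ε : ℝ} (ha : 0 < a)
    (hx : 0 < x) (hε : 0 ≤ ε) (hb : |(b : ℝ)| ≤ a * x)
    (hpoly : ∀ y : ℝ, ∑ j ∈ range (s + 1), β j * y ^ j
      = ∑ i ∈ range (s + 1), α i * ((a : ℝ) * y + b) ^ i)
    (hα : ∀ i, 1 ≤ i → i ≤ s → |q * α i - ((round (q * α i) : ℤ) : ℝ)| ≤ ε / ((a : ℝ) * x) ^ i)
    (hj : 1 ≤ j) (hjs : j ≤ s) :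
    |q * β j - ((round (q * β j) : ℤ) : ℝ)| ≤ (s + 1) * 2 ^ s * ε / x ^ j := by
  have hqβ : q * β j
      = ∑ i ∈ range (s + 1), ((i.choose j * a ^ j * b ^ (i - j) : ℤ) : ℝ) * (q * α i) := by
    rw [eq_sum_choose_of_forall_sum_mul_pow_eq (s + 1) α β a b hpoly (Nat.lt_succ_of_le hjs),
      mul_sum]
    refine sum_congr rfl fun i _ => ?_
    push_cast
    ring
  have hterm : ∀ i ∈ range (s + 1), |((i.choose j * a ^ j * b ^ (i - j) : ℤ) : ℝ)|
      * |q * α i - ((round (q * α i) : ℤ) : ℝ)| ≤ i.choose j * ε / x ^ j := by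
    intro i hi
    push_cast
    rcases lt_or_ge i j with hij | hji
    · simp [Nat.choose_eq_zero_of_lt hij]
    · exact abs_choose_mul_pow_mul_pow_sub_mul_le (by exact_mod_cast ha) hx hε hb hji
        (hα i (hj.trans hji) (mem_range_succ_iff.1 hi))
  rw [hqβ]
  calc _ ≤ _ := abs_sub_round_sum_intCast_mul_le _ _ _
    _ ≤ ∑ i ∈ range (s + 1), i.choose j * ε / x ^ j := sum_le_sum hterm
    _ = (∑ i ∈ range (s + 1), i.choose j : ℕ) * ε / x ^ j := by
        rw [← sum_div, ← sum_mul, Nat.cast_sum]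
    _ ≤ (s + 1) * 2 ^ s * ε / x ^ j := by
        gcongr
        exact_mod_cast sum_range_choose_le s j

theorem stmt_17_general (s : ℕ) :
    ∃ C : ℝ, 0 < C ∧
      ∀ (α β : ℕ → ℝ) (q : ℕ) (a b : ℤ) (x ε : ℝ),
        1 ≤ q → 1 ≤ a → 2 ≤ x → 0 ≤ ε → |(b : ℝ)| ≤ (a : ℝ) * x →
        (∀ y : ℝ, ∑ j ∈ Finset.range (s + 1), β j * y ^ j
            = ∑ i ∈ Finset.range (s + 1), α i * ((a : ℝ) * y + (b : ℝ)) ^ i) →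
        (∀ i, 1 ≤ i → i ≤ s →
          |(q : ℝ) * α i - ((round ((q : ℝ) * α i) : ℤ) : ℝ)| ≤ ε / ((a : ℝ) * x) ^ i) →
        ∃ q' : ℕ, 1 ≤ q' ∧ (q' : ℝ) ≤ C * q ∧
          ∀ j, 1 ≤ j → j ≤ s →
            |(q' : ℝ) * β j - ((round ((q' : ℝ) * β j) : ℤ) : ℝ)| ≤ C * ε / x ^ j := by
  refine ⟨(s + 1) * 2 ^ s, by positivity, ?_⟩
  intro α β q a b x ε hq ha hx hε hb hpoly hα
  have hC : (1 : ℝ) ≤ (s + 1) * 2 ^ s :=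
    one_le_mul_of_one_le_of_one_le (by simp) (one_le_pow₀ one_le_two)
  exact ⟨q, hq, le_mul_of_one_le_left q.cast_nonneg hC, fun j hj hjs =>
    abs_mul_coeff_sub_round_le ha (by linarith) hε hb hpoly hα hj hjs⟩

/-- Coefficient transfer: if `Σ_j β_j n^j = Σ_i α_i (an+b)^i` as polynomials, `|b| ≤ ax`,
and `‖q α_i‖ ≤ ε (ax)^{−i}` for `1 ≤ i ≤ s`, then there is `q' ≤ C(s) q` with
`‖q' β_j‖ ≤ C(s) ε x^{−j}` for `1 ≤ j ≤ s` (here `‖·‖` is the distance to the nearest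
integer). -/
theorem stmt_17 (s : ℕ) (hs : 1 ≤ s) :
    ∃ C : ℝ, 0 < C ∧
      ∀ (α β : ℕ → ℝ) (q : ℕ) (a b : ℤ) (x ε : ℝ),
        1 ≤ q → 1 ≤ a → 2 ≤ x → 0 ≤ ε → |(b : ℝ)| ≤ (a : ℝ) * x →
        (∀ y : ℝ, ∑ j ∈ Finset.range (s + 1), β j * y ^ j
            = ∑ i ∈ Finset.range (s + 1), α i * ((a : ℝ) * y + (b : ℝ)) ^ i) →
        (∀ i, 1 ≤ i → i ≤ s →
          |(q : ℝ) * α i - ((round ((q : ℝ) * α i) : ℤ) : ℝ)| ≤ ε / ((a : ℝ) * x) ^ i) →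
        ∃ q' : ℕ, 1 ≤ q' ∧ (q' : ℝ) ≤ C * q ∧
          ∀ j, 1 ≤ j → j ≤ s →
            |(q' : ℝ) * β j - ((round ((q' : ℝ) * β j) : ℤ) : ℝ)| ≤ C * ε / x ^ j :=
  stmt_17_general s
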